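/- (Emulation, core construction.) Assume Γ_1 > 0 and e⁰ ∈ E with r(e⁰) = 0. Let ξ be a CCS with full support and π a policy such that V^π_ξ(h) > 0 for every history h consistent with π. Then for every ε > 0 there exists ε' ∈ (0,1] such that, with ν the π-dogmatic environment for ξ and ξ' := (1/2)·ν + (ε'/2)·ξ, every ξ'-optimal policy π* satisfies |V^{π*}_μ(ϵ) − V^π_μ(ϵ)| < ε for every CCS μ (where ϵ is the empty history). -/

import Mathlib

open scoped Classical

/-- A history: a finite alternating sequence of action–percept pairs. -/
abbrev Hist (A E : Type*) := List (A × E)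

/-- A policy maps histories to actions. -/
abbrev Policy (A E : Type*) := Hist A E → A

/-- A chronological conditional semimeasure (CCS, environment):
values in `[0,1]`, and the chronological semimeasure condition. -/
structure CCS (A E : Type*) [Fintype E] where
  val : Hist A E → ℝ
  nonneg : ∀ h, 0 ≤ val h
  le_one : ∀ h, val h ≤ 1
  chrono : ∀ (h : Hist A E) (a : A), (∑ e : E, val (h ++ [(a, e)])) ≤ val h

/-- `Gam γ t = Γ_t = ∑_{i ≥ t} γ_i`, the discount normalization factor. -/
noncomputable def Gam (γ : ℕ → ℝ) (t : ℕ) : ℝ := ∑' i : ℕ, γ (t + i)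

/-- Extend a history by a list of percepts, with actions chosen by the policy `π`. -/
def extendH {A E : Type*} (π : Policy A E) : Hist A E → List E → Hist A E
  | h, [] => h
  | h, e :: es => extendH π (h ++ [(π h, e)]) es

/-- The value `V^π_ν(ae_{<t})` of policy `π` in environment `ν` given history `h = ae_{<t}`
(with `t = h.length + 1`); `0` whenever `Γ_t ≤ 0` or `ν(e_{<t} ∣ a_{<t}) ≤ 0`. -/
noncomputable def V {A E : Type*} [Fintype E] (γ : ℕ → ℝ) (r : E → ℝ)
    (π : Policy A E) (ν : CCS A E) (h : Hist A E) : ℝ :=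
  if 0 < Gam γ (h.length + 1) ∧ 0 < ν.val h then
    (1 / (Gam γ (h.length + 1) * ν.val h)) *
      ∑' n : ℕ, γ (h.length + 1 + n) *
        ∑ es : Fin (n + 1) → E,
          r (es (Fin.last n)) * ν.val (extendH π h (List.ofFn es))
  else 0

/-- The value `V^π_ν(h a)` of a history ending in the action `a`:
the action at time `t` is `a`, and `π` is followed from time `t+1` on. -/
noncomputable def Vact {A E : Type*} [Fintype E] (γ : ℕ → ℝ) (r : E → ℝ)
    (π : Policy A E) (ν : CCS A E) (h : Hist A E) (a : A) : ℝ :=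
  V γ r (fun h' => if h' = h then a else π h') ν h

/-- The optimal value `V^*_ν(h) = sup_π V^π_ν(h)`. -/
noncomputable def VOpt {A E : Type*} [Fintype E] (γ : ℕ → ℝ) (r : E → ℝ)
    (ν : CCS A E) (h : Hist A E) : ℝ :=
  ⨆ π : Policy A E, V γ r π ν h

/-- The optimal value `V^*_ν(h a)` of a history ending in an action. -/
noncomputable def VOptAct {A E : Type*} [Fintype E] (γ : ℕ → ℝ) (r : E → ℝ)
    (ν : CCS A E) (h : Hist A E) (a : A) : ℝ :=
  ⨆ π : Policy A E, Vact γ r π ν h a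

/-- A history is consistent with `π` iff each of its actions is the one chosen by `π`. -/
def Consistent {A E : Type*} (π : Policy A E) (h : Hist A E) : Prop :=
  ∀ (k : ℕ) (hk : k < h.length), (h.get ⟨k, hk⟩).1 = π (h.take k)

/-- Auxiliary function for the dogmatic environment: `pre` is the consistent
prefix processed so far, the second argument is the rest of the history. -/
noncomputable def dogmaAux {A E : Type*} [Fintype E] (ξ : CCS A E) (π : Policy A E)
    (e0 : E) : Hist A E → Hist A E → ℝ
  | pre, [] => ξ.val pre
  | pre, (a, e) :: rest =>
    if a = π pre then dogmaAux ξ π e0 (pre ++ [(a, e)]) rest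
    else if e = e0 ∧ ∀ p ∈ rest, p.2 = e0 then ξ.val pre else 0

/-- The `π`-dogmatic environment for `ξ`: mimics `ξ` while the actions follow `π`;
from the first deviation on it deterministically emits `e0` and freezes the mass. -/
noncomputable def dogma {A E : Type*} [Fintype E] (ξ : CCS A E) (π : Policy A E)
    (e0 : E) (h : Hist A E) : ℝ :=
  dogmaAux ξ π e0 [] h

/-- A CCS has full support iff it is positive on every history. -/
def FullSupport {A E : Type*} [Fintype E] (ξ : CCS A E) : Prop :=
  ∀ h : Hist A E, 0 < ξ.val h

/-!
On histories consistent with `π` the dogmatic environment `ν` coincides with `ξ`, so following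
`π` from a consistent history `h` earns a `ξ'`-value of at least `V^π_ξ(h) / 2`; a deviation
makes `ν` emit the reward-free percept `e0` forever, so only the `ε'/2 · ξ` part of `ξ'` is left,
worth at most `ε' / 2`. Choosing `ε'` below `V^π_ξ` on the finitely many consistent histories
shorter than a horizon `T` therefore forces every `ξ'`-optimal policy to agree with `π` up to
time `T`, and the rewards after `T` weigh at most `Γ_{T+1} / Γ_1 < ε`.
-/

open Filter Topology

section Consistency
variable {A E : Type*}

lemma consistent_nil (π : Policy A E) : Consistent π [] :=
  fun _ hk => absurd hk (Nat.not_lt_zero _)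

lemma Consistent.append_singleton {π : Policy A E} {h : Hist A E} (hc : Consistent π h) (e : E) :
    Consistent π (h ++ [(π h, e)]) := by
  intro k hk
  rcases Nat.lt_succ_iff_lt_or_eq.mp (by simpa using hk) with hlt | rfl
  · simpa [List.getElem_append_left hlt, List.take_append_of_le_length hlt.le] using hc k hlt
  · simp

lemma Consistent.extendH {π : Policy A E} {h : Hist A E} (hc : Consistent π h) (l : List E) :
    Consistent π (extendH π h l) := by
  induction l generalizing h with
  | nil => exact hc
  | cons e l ih => exact ih (hc.append_singleton e)

lemma extendH_eq_append (τ : Policy A E) (h : Hist A E) (l : List E) :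
    ∃ tail : Hist A E, extendH τ h l = h ++ tail ∧ tail.map Prod.snd = l := by
  induction l generalizing h with
  | nil => exact ⟨[], by simp [extendH]⟩
  | cons e l ih =>
    obtain ⟨tail, h_eq, h_map⟩ := ih (h ++ [(τ h, e)])
    exact ⟨(τ h, e) :: tail, by simp [extendH, h_eq], by simp [h_map]⟩

lemma extendH_eq_of_eq_on_consistent {π τ : Policy A E} {T : ℕ}
    (hagree : ∀ h, Consistent π h → h.length < T → τ h = π h)
    {h : Hist A E} (hc : Consistent π h) {l : List E} (hlen : h.length + l.length ≤ T) :
    extendH τ h l = extendH π h l := by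
  induction l generalizing h with
  | nil => rfl
  | cons e l ih =>
    simp only [List.length_cons] at hlen
    simp only [extendH, hagree h hc (by omega)]
    exact ih (hc.append_singleton e) (by simp only [List.length_append, List.length_singleton]; omega)

end Consistency

section Dogmatic
variable {A E : Type*} [Fintype E] {ξ : CCS A E} {π : Policy A E} {e0 : E}

lemma dogmaAux_append {pre h : Hist A E}
    (hc : ∀ (k : ℕ) (hk : k < h.length), (h.get ⟨k, hk⟩).1 = π (pre ++ h.take k))
    (rest : Hist A E) :
    dogmaAux ξ π e0 pre (h ++ rest) = dogmaAux ξ π e0 (pre ++ h) rest := by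
  induction h generalizing pre with
  | nil => simp
  | cons p h ih =>
    obtain ⟨a, e⟩ := p
    have ha : a = π pre := by simpa using hc 0 (by simp)
    rw [List.cons_append, dogmaAux, if_pos ha,
      ih fun k hk => by simpa using hc (k + 1) (by simpa)]
    simp

lemma dogma_of_consistent {h : Hist A E} (hc : Consistent π h) : dogma ξ π e0 h = ξ.val h := by
  simpa [dogma, dogmaAux] using
    dogmaAux_append (ξ := ξ) (e0 := e0) (pre := []) (fun k hk => by simpa using hc k hk) []

lemma dogma_append_cons_of_ne {h : Hist A E} (hc : Consistent π h) {a : A} (ha : a ≠ π h)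
    (e : E) (tail : Hist A E) :
    dogma ξ π e0 (h ++ (a, e) :: tail) =
      if e = e0 ∧ ∀ p ∈ tail, p.2 = e0 then ξ.val h else 0 := by
  rw [dogma, dogmaAux_append (pre := []) (fun k hk => by simpa using hc k hk), dogmaAux,
    List.nil_append, if_neg ha]

end Dogmatic

section Discounting
variable {γ : ℕ → ℝ}

lemma Gam_nonneg (hγ0 : ∀ t, 0 ≤ γ t) (t : ℕ) : 0 ≤ Gam γ t :=
  tsum_nonneg fun _ => hγ0 _

lemma summable_shift (hγs : Summable γ) (t : ℕ) : Summable fun n => γ (t + n) := by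
  simpa [add_comm] using (summable_nat_add_iff t).2 hγs

lemma exists_Gam_add_lt (γ : ℕ → ℝ) (t : ℕ) {δ : ℝ} (hδ : 0 < δ) : ∃ T, Gam γ (t + T) < δ := by
  obtain ⟨T, hT⟩ := ((tendsto_sum_nat_add γ).eventually (gt_mem_nhds hδ)).exists_forall_of_atTop
  refine ⟨T, ?_⟩
  simpa only [Gam, add_comm] using hT (t + T) (Nat.le_add_left T t)

lemma abs_tsum_sub_tsum_le {f g b : ℕ → ℝ} (hf : Summable f) (hg : Summable g)
    (hb : Summable b) {T : ℕ} (hfg : ∀ n < T, f n = g n) (hbd : ∀ n, |f n - g n| ≤ b n) :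
    |∑' n, f n - ∑' n, g n| ≤ ∑' n, b (n + T) := by
  rw [← hf.tsum_sub hg, ← (hf.sub hg).sum_add_tsum_nat_add T,
    Finset.sum_eq_zero fun n hn => sub_eq_zero.2 (hfg n (Finset.mem_range.1 hn)), zero_add]
  exact tsum_of_norm_bounded ((summable_nat_add_iff T).2 hb).hasSum fun n =>
    (Real.norm_eq_abs _).trans_le (hbd (n + T))

end Discounting

section Value
variable {A E : Type*} [Fintype E]

lemma sum_fun_fin_succ {M : Type*} [AddCommMonoid M] {n : ℕ} (f : (Fin (n + 1) → E) → M) :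
    ∑ es, f es = ∑ e : E, ∑ es : Fin n → E, f (Fin.cons e es) := by
  rw [← (Fin.consEquiv fun _ => E).sum_comp f, Fintype.sum_prod_type]
  rfl

lemma sum_extendH_le (ν : CCS A E) (τ : Policy A E) (n : ℕ) (h : Hist A E) :
    ∑ es : Fin n → E, ν.val (extendH τ h (List.ofFn es)) ≤ ν.val h := by
  induction n generalizing h with
  | zero => simp [extendH]
  | succ n ih =>
    rw [sum_fun_fin_succ]
    calc ∑ e : E, ∑ es : Fin n → E, ν.val (extendH τ h (List.ofFn (Fin.cons e es)))
        ≤ ∑ e : E, ν.val (h ++ [(τ h, e)]) :=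
          Finset.sum_le_sum fun e _ => by
            simpa [List.ofFn_succ, extendH] using ih (h ++ [(τ h, e)])
      _ ≤ ν.val h := ν.chrono h (τ h)

/-- `∑_{e_{t:t+n}} r(e_{t+n}) ν(e_{1:t+n} ∣ a_{1:t+n})`, with the actions from time `t` on
chosen by `τ`. -/
noncomputable def rewardSum (r : E → ℝ) (τ : Policy A E) (ν : CCS A E) (h : Hist A E)
    (n : ℕ) : ℝ :=
  ∑ es : Fin (n + 1) → E, r (es (Fin.last n)) * ν.val (extendH τ h (List.ofFn es))

noncomputable def discountedReward (γ : ℕ → ℝ) (r : E → ℝ) (τ : Policy A E) (ν : CCS A E)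
    (h : Hist A E) : ℝ :=
  ∑' n : ℕ, γ (h.length + 1 + n) * rewardSum r τ ν h n

lemma V_eq (γ : ℕ → ℝ) (r : E → ℝ) (τ : Policy A E) (ν : CCS A E) (h : Hist A E) :
    V γ r τ ν h = if 0 < Gam γ (h.length + 1) ∧ 0 < ν.val h then
      1 / (Gam γ (h.length + 1) * ν.val h) * discountedReward γ r τ ν h else 0 :=
  rfl

variable {γ : ℕ → ℝ} {r : E → ℝ}

lemma rewardSum_nonneg (hr : ∀ e, 0 ≤ r e ∧ r e ≤ 1) (τ : Policy A E) (ν : CCS A E)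
    (h : Hist A E) (n : ℕ) : 0 ≤ rewardSum r τ ν h n :=
  Finset.sum_nonneg fun _ _ => mul_nonneg (hr _).1 (ν.nonneg _)

lemma rewardSum_le (hr : ∀ e, 0 ≤ r e ∧ r e ≤ 1) (τ : Policy A E) (ν : CCS A E)
    (h : Hist A E) (n : ℕ) : rewardSum r τ ν h n ≤ ν.val h :=
  (Finset.sum_le_sum fun _ _ => mul_le_of_le_one_left (ν.nonneg _) (hr _).2).trans
    (sum_extendH_le ν τ (n + 1) h)

lemma rewardSum_of_val_eq_add {ν₁ ν₂ ν : CCS A E} {a b : ℝ}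
    (hν : ∀ h, ν.val h = a * ν₁.val h + b * ν₂.val h) (τ : Policy A E) (h : Hist A E) (n : ℕ) :
    rewardSum r τ ν h n = a * rewardSum r τ ν₁ h n + b * rewardSum r τ ν₂ h n := by
  simp only [rewardSum, hν, Finset.mul_sum, ← Finset.sum_add_distrib]
  exact Finset.sum_congr rfl fun _ _ => by ring

lemma discountedReward_nonneg (hγ0 : ∀ t, 0 ≤ γ t) (hr : ∀ e, 0 ≤ r e ∧ r e ≤ 1)
    (τ : Policy A E) (ν : CCS A E) (h : Hist A E) : 0 ≤ discountedReward γ r τ ν h :=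
  tsum_nonneg fun _ => mul_nonneg (hγ0 _) (rewardSum_nonneg hr τ ν h _)

lemma summable_discountedReward (hγ0 : ∀ t, 0 ≤ γ t) (hγs : Summable γ)
    (hr : ∀ e, 0 ≤ r e ∧ r e ≤ 1) (τ : Policy A E) (ν : CCS A E) (h : Hist A E) :
    Summable fun n => γ (h.length + 1 + n) * rewardSum r τ ν h n :=
  ((summable_shift hγs _).mul_right (ν.val h)).of_nonneg_of_le
    (fun _ => mul_nonneg (hγ0 _) (rewardSum_nonneg hr τ ν h _))
    (fun _ => mul_le_mul_of_nonneg_left (rewardSum_le hr τ ν h _) (hγ0 _))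

lemma discountedReward_le (hγ0 : ∀ t, 0 ≤ γ t) (hγs : Summable γ)
    (hr : ∀ e, 0 ≤ r e ∧ r e ≤ 1) (τ : Policy A E) (ν : CCS A E) (h : Hist A E) :
    discountedReward γ r τ ν h ≤ Gam γ (h.length + 1) * ν.val h := by
  rw [Gam, ← tsum_mul_right]
  exact (summable_discountedReward hγ0 hγs hr τ ν h).tsum_le_tsum
    (fun _ => mul_le_mul_of_nonneg_left (rewardSum_le hr τ ν h _) (hγ0 _))
    ((summable_shift hγs _).mul_right _)

lemma discountedReward_of_val_eq_add (hγ0 : ∀ t, 0 ≤ γ t) (hγs : Summable γ)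
    (hr : ∀ e, 0 ≤ r e ∧ r e ≤ 1) {ν₁ ν₂ ν : CCS A E} {a b : ℝ}
    (hν : ∀ h, ν.val h = a * ν₁.val h + b * ν₂.val h) (τ : Policy A E) (h : Hist A E) :
    discountedReward γ r τ ν h =
      a * discountedReward γ r τ ν₁ h + b * discountedReward γ r τ ν₂ h := by
  simp only [discountedReward, rewardSum_of_val_eq_add hν, ← tsum_mul_left]
  rw [← ((summable_discountedReward hγ0 hγs hr τ ν₁ h).mul_left a).tsum_add
    ((summable_discountedReward hγ0 hγs hr τ ν₂ h).mul_left b)]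
  exact tsum_congr fun _ => by ring

lemma V_le_one (hγ0 : ∀ t, 0 ≤ γ t) (hγs : Summable γ) (hr : ∀ e, 0 ≤ r e ∧ r e ≤ 1)
    (τ : Policy A E) (ν : CCS A E) (h : Hist A E) : V γ r τ ν h ≤ 1 := by
  rw [V_eq]
  split_ifs with hpos
  · rw [one_div_mul_eq_div, div_le_one (mul_pos hpos.1 hpos.2)]
    exact discountedReward_le hγ0 hγs hr τ ν h
  · exact zero_le_one

lemma V_le_VOpt (hγ0 : ∀ t, 0 ≤ γ t) (hγs : Summable γ) (hr : ∀ e, 0 ≤ r e ∧ r e ≤ 1)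
    (τ : Policy A E) (ν : CCS A E) (h : Hist A E) : V γ r τ ν h ≤ VOpt γ r ν h :=
  le_ciSup ⟨1, Set.forall_mem_range.2 fun τ => V_le_one hγ0 hγs hr τ ν h⟩ τ

lemma abs_discountedReward_sub_le (hγ0 : ∀ t, 0 ≤ γ t) (hγs : Summable γ)
    (hr : ∀ e, 0 ≤ r e ∧ r e ≤ 1) (τ π : Policy A E) (μ : CCS A E) (h : Hist A E) {T : ℕ}
    (hsum : ∀ n < T, rewardSum r τ μ h n = rewardSum r π μ h n) :
    |discountedReward γ r τ μ h - discountedReward γ r π μ h| ≤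
      Gam γ (h.length + 1 + T) * μ.val h := by
  have hbd : ∀ n, |γ (h.length + 1 + n) * rewardSum r τ μ h n -
      γ (h.length + 1 + n) * rewardSum r π μ h n| ≤ γ (h.length + 1 + n) * μ.val h := fun n =>
    abs_sub_le_of_nonneg_of_le
      (mul_nonneg (hγ0 _) (rewardSum_nonneg hr τ μ h n))
      (mul_le_mul_of_nonneg_left (rewardSum_le hr τ μ h n) (hγ0 _))
      (mul_nonneg (hγ0 _) (rewardSum_nonneg hr π μ h n))
      (mul_le_mul_of_nonneg_left (rewardSum_le hr π μ h n) (hγ0 _))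
  refine (abs_tsum_sub_tsum_le (summable_discountedReward hγ0 hγs hr τ μ h)
    (summable_discountedReward hγ0 hγs hr π μ h) ((summable_shift hγs _).mul_right _)
    (fun n hn => by rw [hsum n hn]) hbd).trans_eq ?_
  rw [Gam, ← tsum_mul_right]
  exact tsum_congr fun n => by rw [← add_assoc, add_right_comm _ n]

lemma abs_V_sub_V_le (hγ0 : ∀ t, 0 ≤ γ t) (hγs : Summable γ) (hr : ∀ e, 0 ≤ r e ∧ r e ≤ 1)
    (τ π : Policy A E) (μ : CCS A E) (h : Hist A E) {T : ℕ}
    (hsum : ∀ n < T, rewardSum r τ μ h n = rewardSum r π μ h n) :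
    |V γ r τ μ h - V γ r π μ h| ≤ Gam γ (h.length + 1 + T) / Gam γ (h.length + 1) := by
  rw [V_eq, V_eq]
  split_ifs with hpos
  · obtain ⟨hG, hμ⟩ := hpos
    rw [← mul_sub, abs_mul, abs_of_pos (by positivity)]
    calc 1 / (Gam γ (h.length + 1) * μ.val h) *
          |discountedReward γ r τ μ h - discountedReward γ r π μ h|
        ≤ 1 / (Gam γ (h.length + 1) * μ.val h) * (Gam γ (h.length + 1 + T) * μ.val h) := by
          gcongr
          exact abs_discountedReward_sub_le hγ0 hγs hr τ π μ h hsum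
      _ = Gam γ (h.length + 1 + T) / Gam γ (h.length + 1) := by field_simp
  · simpa using div_nonneg (Gam_nonneg hγ0 _) (Gam_nonneg hγ0 _)

end Value

section DogmaticMixture
variable {A E : Type*} [Fintype E] {γ : ℕ → ℝ} {r : E → ℝ} {e0 : E} {ξ ν : CCS A E}
  {π τ : Policy A E}

lemma rewardSum_dogma_of_consistent (hν : ∀ h, ν.val h = dogma ξ π e0 h) {h : Hist A E}
    (hc : Consistent π h) (n : ℕ) : rewardSum r π ν h n = rewardSum r π ξ h n :=
  Finset.sum_congr rfl fun _ _ => by rw [hν, dogma_of_consistent (hc.extendH _)]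

/-- After a deviation from `π` the dogmatic environment only emits the reward-free `e0`. -/
lemma rewardSum_dogma_eq_zero_of_ne (hr0 : r e0 = 0) (hν : ∀ h, ν.val h = dogma ξ π e0 h)
    {h : Hist A E} (hc : Consistent π h) (hτ : τ h ≠ π h) (n : ℕ) :
    rewardSum r τ ν h n = 0 := by
  refine Finset.sum_eq_zero fun es _ => ?_
  have hofn : List.ofFn es = es 0 :: List.ofFn fun i => es i.succ := List.ofFn_succ
  obtain ⟨tail, h_eq, h_map⟩ :=
    extendH_eq_append τ (h ++ [(τ h, es 0)]) (List.ofFn fun i => es i.succ)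
  have hext : extendH τ h (List.ofFn es) = h ++ (τ h, es 0) :: tail := by
    rw [hofn]; simp [extendH, h_eq]
  rw [hν, hext, dogma_append_cons_of_ne hc hτ]
  split_ifs with he0
  · have hlast : es (Fin.last n) ∈ es 0 :: tail.map Prod.snd := by
      rw [h_map, ← hofn]; exact List.mem_ofFn.2 ⟨_, rfl⟩
    obtain hlast | ⟨p, hp, hlast⟩ := List.mem_cons.1 hlast |>.imp_right List.mem_map.1
    · rw [hlast, he0.1, hr0, zero_mul]
    · rw [← hlast, he0.2 p hp, hr0, zero_mul]
  · exact mul_zero _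

lemma discountedReward_dogma_of_consistent (hν : ∀ h, ν.val h = dogma ξ π e0 h)
    {h : Hist A E} (hc : Consistent π h) :
    discountedReward γ r π ν h = discountedReward γ r π ξ h := by
  simp only [discountedReward, rewardSum_dogma_of_consistent hν hc]

lemma discountedReward_dogma_eq_zero_of_ne (hr0 : r e0 = 0)
    (hν : ∀ h, ν.val h = dogma ξ π e0 h) {h : Hist A E} (hc : Consistent π h) (hτ : τ h ≠ π h) :
    discountedReward γ r τ ν h = 0 := by
  simp only [discountedReward, rewardSum_dogma_eq_zero_of_ne hr0 hν hc hτ, mul_zero, tsum_zero]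

/-- In `ξ'`, following `π` from `h` is worth at least `V^π_ξ(h)/2`, a deviation at most `ε'/2`. -/
lemma eq_of_VOpt_of_lt_V (hγ0 : ∀ t, 0 ≤ γ t) (hγs : Summable γ)
    (hr : ∀ e, 0 ≤ r e ∧ r e ≤ 1) (hr0 : r e0 = 0) {ξ' : CCS A E} {ε' : ℝ} (hε' : 0 ≤ ε')
    (hν : ∀ h, ν.val h = dogma ξ π e0 h)
    (hξ' : ∀ h, ξ'.val h = 1 / 2 * ν.val h + ε' / 2 * ξ.val h)
    (hτ : ∀ h, V γ r τ ξ' h = VOpt γ r ξ' h) {h : Hist A E} (hc : Consistent π h)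
    (hlt : ε' < V γ r π ξ h) : τ h = π h := by
  by_contra hne
  obtain ⟨hG, hξ⟩ : 0 < Gam γ (h.length + 1) ∧ 0 < ξ.val h := by
    by_contra hpos
    rw [V_eq, if_neg hpos] at hlt
    linarith
  have hξ'pos : 0 < ξ'.val h := by
    rw [hξ', hν, dogma_of_consistent hc]; positivity
  have hVπ : discountedReward γ r π ξ h = Gam γ (h.length + 1) * ξ.val h * V γ r π ξ h := by
    rw [V_eq, if_pos ⟨hG, hξ⟩]; field_simp
  have hfollow : 1 / 2 * discountedReward γ r π ξ h ≤ discountedReward γ r π ξ' h := by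
    rw [discountedReward_of_val_eq_add hγ0 hγs hr hξ', discountedReward_dogma_of_consistent hν hc]
    nlinarith [discountedReward_nonneg hγ0 hr π ξ h]
  have hdeviate : discountedReward γ r τ ξ' h ≤ ε' / 2 * (Gam γ (h.length + 1) * ξ.val h) := by
    rw [discountedReward_of_val_eq_add hγ0 hγs hr hξ',
      discountedReward_dogma_eq_zero_of_ne hr0 hν hc hne, mul_zero, zero_add]
    exact mul_le_mul_of_nonneg_left (discountedReward_le hγ0 hγs hr τ ξ h) (by positivity)
  have hopt : discountedReward γ r π ξ' h ≤ discountedReward γ r τ ξ' h := by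
    have := hτ h ▸ V_le_VOpt hγ0 hγs hr π ξ' h
    rwa [V_eq, V_eq, if_pos ⟨hG, hξ'pos⟩, if_pos ⟨hG, hξ'pos⟩,
      mul_le_mul_iff_right₀ (by positivity)] at this
  nlinarith [mul_lt_mul_of_pos_left hlt (mul_pos hG hξ)]

end DogmaticMixture

theorem emulation_general {A E : Type*} [Fintype A] [Fintype E]
    (γ : ℕ → ℝ) (hγ0 : ∀ t, 0 ≤ γ t) (hγs : Summable γ)
    (r : E → ℝ) (hr : ∀ e : E, 0 ≤ r e ∧ r e ≤ 1)
    (hΓ1 : 0 < Gam γ 1)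
    (e0 : E) (hr0 : r e0 = 0)
    (ξ : CCS A E)
    (π : Policy A E) (hπ : ∀ h : Hist A E, Consistent π h → 0 < V γ r π ξ h)
    (ε : ℝ) (hε : 0 < ε) :
    ∃ ε' : ℝ, 0 < ε' ∧ ε' ≤ 1 ∧
      ∀ ν ξ' : CCS A E,
        (∀ h : Hist A E, ν.val h = dogma ξ π e0 h) →
        (∀ h : Hist A E, ξ'.val h = (1 / 2) * ν.val h + (ε' / 2) * ξ.val h) →
        ∀ πs : Policy A E, (∀ h : Hist A E, V γ r πs ξ' h = VOpt γ r ξ' h) →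
          ∀ μ : CCS A E, |V γ r πs μ [] - V γ r π μ []| < ε := by
  obtain ⟨T, hT⟩ := exists_Gam_add_lt γ 1 (mul_pos hε hΓ1)
  have hshort : {h : Hist A E | Consistent π h ∧ h.length < T}.Finite :=
    (List.finite_length_lt _ T).subset fun _ hh => hh.2
  have hsmall : ∀ᶠ c in 𝓝[>] (0 : ℝ),
      c ≤ 1 ∧ ∀ h ∈ {h : Hist A E | Consistent π h ∧ h.length < T}, c < V γ r π ξ h :=
    (eventually_nhdsWithin_of_eventually_nhds (eventually_le_nhds one_pos)).and <|
      (eventually_all_finite hshort).2 fun h hh =>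
        eventually_nhdsWithin_of_eventually_nhds (eventually_lt_nhds (hπ h hh.1))
  obtain ⟨ε', ⟨hε'1, hε'V⟩, hε'0⟩ := (hsmall.and self_mem_nhdsWithin).exists
  refine ⟨ε', hε'0, hε'1, fun ν ξ' hν hξ' πs hπs μ => ?_⟩
  have hfollow : ∀ h, Consistent π h → h.length < T → πs h = π h := fun h hc hl =>
    eq_of_VOpt_of_lt_V hγ0 hγs hr hr0 hε'0.le hν hξ' hπs hc (hε'V h ⟨hc, hl⟩)
  have hsum : ∀ n < T, rewardSum r πs μ [] n = rewardSum r π μ [] n := fun n hn =>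
    Finset.sum_congr rfl fun es _ => by
      rw [extendH_eq_of_eq_on_consistent hfollow (consistent_nil π) (by simpa using hn)]
  calc |V γ r πs μ [] - V γ r π μ []| ≤ Gam γ (1 + T) / Gam γ 1 :=
        abs_V_sub_V_le hγ0 hγs hr πs π μ [] hsum
    _ < ε := (div_lt_iff₀ hΓ1).2 hT

/-- **AIXI emulating arbitrary policies (core construction).** For a suitable `ε'`,
every `ξ'`-optimal policy for the dogmatic mixture `ξ' = (1/2)·ν + (ε'/2)·ξ`
achieves a value `ε`-close to that of `π` in every environment. -/
theorem emulation {A E : Type*} [Fintype A] [Nonempty A] [Fintype E] [Nonempty E]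
    (γ : ℕ → ℝ) (hγ0 : ∀ t, 0 ≤ γ t) (hγs : Summable γ)
    (r : E → ℝ) (hr : ∀ e : E, 0 ≤ r e ∧ r e ≤ 1)
    (hΓ1 : 0 < Gam γ 1)
    (e0 : E) (hr0 : r e0 = 0)
    (ξ : CCS A E) (hfs : FullSupport ξ)
    (π : Policy A E) (hπ : ∀ h : Hist A E, Consistent π h → 0 < V γ r π ξ h)
    (ε : ℝ) (hε : 0 < ε) :
    ∃ ε' : ℝ, 0 < ε' ∧ ε' ≤ 1 ∧
      ∀ ν ξ' : CCS A E,
        (∀ h : Hist A E, ν.val h = dogma ξ π e0 h) →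
        (∀ h : Hist A E, ξ'.val h = (1 / 2) * ν.val h + (ε' / 2) * ξ.val h) →
        ∀ πs : Policy A E, (∀ h : Hist A E, V γ r πs ξ' h = VOpt γ r ξ' h) →
          ∀ μ : CCS A E, |V γ r πs μ [] - V γ r π μ []| < ε :=
  emulation_general γ hγ0 hγs r hr hΓ1 e0 hr0 ξ π hπ ε hε
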